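/- arXiv:1803.06677 — 2 statements merged into one kernel-verified Lean document; each statement's English description precedes it below -/
import Mathlib

section
/- Let M, N be natural numbers with 1 ≤ M ≤ N, let a_1,…,a_M > 0 and b_0, b_1,…,b_N > 0 be real numbers, fix i ∈ {1,…,M}, and let q be a complex number with Re q > −b_0. For a real parameter c > −b_0 (in place of b_0) define η_{M−1,N}(c; q) = exp( ∫_0^∞ (e^{−tq} − 1) e^{−c t} ∏_{j=1}^N (1 − e^{−b_j t}) / ∏_{l ≠ i} (1 − e^{−a_l t}) dt/t ), where the denominator product runs over the M−1 indices l ∈ {1,…,M} with l ≠ i. Then exp( ∫_0^∞ (e^{−tq} − 1) e^{−b_0 t} ∏_{j=1}^N (1 − e^{−b_j t}) / ∏_{l=1}^M (1 − e^{−a_l t}) dt/t ) = ∏_{k=0}^∞ η_{M−1,N}(b_0 + k a_i; q), with the infinite product over k convergent. -/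
/-!
For `t > 0`, expanding `1 / (1 - e^{-a_i t}) = ∑_k e^{-k a_i t}` writes the Lévy–Khinchine
kernel of `η_{M,N}` as the sum over `k` of the kernels of `η_{M-1,N}` with `b_0` replaced by
`b_0 + k a_i`. These kernels are nonnegative, so the partial sums of the integrands are dominated
by the norm of the full integrand, which is integrable: near `0` because `M ≤ N` keeps the kernel
bounded while `|e^{-tq} - 1| = O(t)`, and near `∞` because `b_0 > 0` and `Re q > -b_0`.
Dominated convergence sums the exponents termwise, and `exp` turns the sum into the product.
-/

open MeasureTheory Finset

noncomputable section

/-- The kernel `e^{-ct} ∏_{j ∈ B} (1 - e^{-b_j t}) / ∏_{l ∈ A} (1 - e^{-a_l t})` of the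
Lévy–Khinchine exponent of `η_{|A|,|B|}`, with `c` in the role of `b_0`. -/
def barnesKernel (a b : ℕ → ℝ) (A B : Finset ℕ) (c t : ℝ) : ℝ :=
  Real.exp (-c * t) * (∏ j ∈ B, (1 - Real.exp (-(b j) * t))) /
    ∏ l ∈ A, (1 - Real.exp (-(a l) * t))

def levyIntegrand (q : ℂ) (K : ℝ → ℝ) (t : ℝ) : ℂ :=
  (Complex.exp (-(t : ℂ) * q) - 1) * (K t : ℂ) / (t : ℂ)

end

lemma hasSum_integral_mul_ofReal {α ι 𝕜 : Type*} [MeasurableSpace α] [Countable ι]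
    [RCLike 𝕜] {μ : Measure α} {f : α → 𝕜} {g : ι → α → ℝ} {G : α → ℝ}
    (hf : AEStronglyMeasurable f μ) (hg : ∀ k, AEStronglyMeasurable (g k) μ)
    (hg₀ : ∀ k, ∀ᵐ x ∂μ, 0 ≤ g k x) (hgG : ∀ᵐ x ∂μ, HasSum (g · x) (G x))
    (hG : Integrable (fun x => f x * G x) μ) :
    HasSum (fun k => ∫ x, f x * g k x ∂μ) (∫ x, f x * G x ∂μ) := by
  have hg₀' : ∀ᵐ x ∂μ, ∀ k, 0 ≤ g k x := ae_all_iff.2 hg₀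
  refine hasSum_integral_of_dominated_convergence (fun k x => ‖f x‖ * g k x)
    (fun k => hf.mul (RCLike.continuous_ofReal.comp_aestronglyMeasurable (hg k)))
    (fun k => ?_) ?_ ?_ ?_
  · filter_upwards [hg₀ k] with x hx
    rw [norm_mul, RCLike.norm_ofReal, abs_of_nonneg hx]
  · filter_upwards [hgG] with x hx using (hx.mul_left _).summable
  · refine hG.norm.congr ?_
    filter_upwards [hgG, hg₀'] with x hx hx₀
    rw [(hx.mul_left _).tsum_eq, norm_mul, RCLike.norm_ofReal,
      abs_of_nonneg (hx.nonneg hx₀)]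
  · filter_upwards [hgG] with x hx
    exact ((RCLike.hasSum_ofReal 𝕜).2 hx).mul_left (f x)

lemma norm_cexp_neg_mul_sub_one_le_of_le_one (q : ℂ) {t : ℝ} (ht₀ : 0 ≤ t)
    (ht₁ : t ≤ 1) :
    ‖Complex.exp (-(t : ℂ) * q) - 1‖ ≤ ‖q‖ * Real.exp ‖q‖ * t := by
  have h := Complex.norm_exp_sub_sum_le_norm_mul_exp (-(t : ℂ) * q) 1
  have hnorm : ‖-(t : ℂ) * q‖ = t * ‖q‖ := by
    rw [norm_mul, norm_neg, Complex.norm_real, Real.norm_of_nonneg ht₀]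
  simp only [Finset.range_one, Finset.sum_singleton, pow_zero, Nat.factorial_zero,
    Nat.cast_one, div_one, pow_one, hnorm] at h
  calc ‖Complex.exp (-(t : ℂ) * q) - 1‖ ≤ t * ‖q‖ * Real.exp (t * ‖q‖) := h
    _ ≤ t * ‖q‖ * Real.exp ‖q‖ := by gcongr; nlinarith [norm_nonneg q]
    _ = ‖q‖ * Real.exp ‖q‖ * t := by ring

lemma norm_cexp_neg_mul_sub_one_le (q : ℂ) (t : ℝ) :
    ‖Complex.exp (-(t : ℂ) * q) - 1‖ ≤ Real.exp (-q.re * t) + 1 := by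
  have h : ‖Complex.exp (-(t : ℂ) * q)‖ = Real.exp (-q.re * t) := by
    rw [Complex.norm_exp]
    simp [Complex.mul_re, mul_comm]
  calc ‖Complex.exp (-(t : ℂ) * q) - 1‖
      ≤ ‖Complex.exp (-(t : ℂ) * q)‖ + ‖(1 : ℂ)‖ := norm_sub_le _ _
    _ = Real.exp (-q.re * t) + 1 := by rw [h, norm_one]

lemma norm_levyIntegrand (q : ℂ) (K : ℝ → ℝ) {t : ℝ} (ht : 0 < t) :
    ‖levyIntegrand q K t‖ = ‖Complex.exp (-(t : ℂ) * q) - 1‖ * |K t| / t := by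
  rw [levyIntegrand, norm_div, norm_mul, Complex.norm_real, Complex.norm_real,
    Real.norm_eq_abs, Real.norm_of_nonneg ht.le]

lemma levyIntegrand_eq_mul (q : ℂ) (K : ℝ → ℝ) :
    levyIntegrand q K = fun t : ℝ => (Complex.exp (-(t : ℂ) * q) - 1) / t * K t :=
  funext fun _ => mul_div_right_comm _ _ _

lemma measurable_levyIntegrand (q : ℂ) {K : ℝ → ℝ} (hK : Measurable K) :
    Measurable (levyIntegrand q K) := by
  unfold levyIntegrand; fun_prop

lemma integrableOn_levyIntegrand {q : ℂ} {K : ℝ → ℝ} {c C C' : ℝ} (hK : Measurable K)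
    (hsmall : ∀ t ∈ Set.Ioc (0 : ℝ) 1, |K t| ≤ C)
    (hlarge : ∀ t ∈ Set.Ioi (1 : ℝ), |K t| ≤ C' * Real.exp (-c * t))
    (hc : 0 < c) (hcq : -c < q.re) :
    IntegrableOn (levyIntegrand q K) (Set.Ioi 0) := by
  have hmeas {s : Set ℝ} : AEStronglyMeasurable (levyIntegrand q K) (volume.restrict s) :=
    (measurable_levyIntegrand q hK).aestronglyMeasurable
  rw [← Set.Ioc_union_Ioi_eq_Ioi zero_le_one]
  refine IntegrableOn.union ?_ ?_
  · refine (integrableOn_const (C := ‖q‖ * Real.exp ‖q‖ * C) measure_Ioc_lt_top.ne).mono'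
      hmeas (ae_restrict_of_forall_mem measurableSet_Ioc fun t ht => ?_)
    rw [norm_levyIntegrand q K ht.1, div_le_iff₀ ht.1]
    calc ‖Complex.exp (-(t : ℂ) * q) - 1‖ * |K t|
        ≤ ‖q‖ * Real.exp ‖q‖ * t * C :=
          mul_le_mul (norm_cexp_neg_mul_sub_one_le_of_le_one q ht.1.le ht.2) (hsmall t ht)
            (abs_nonneg _) (by have := ht.1; positivity)
      _ = ‖q‖ * Real.exp ‖q‖ * C * t := by ring
  · have hdom : IntegrableOn
        (fun t => C' * (Real.exp (-(q.re + c) * t) + Real.exp (-c * t))) (Set.Ioi 1) :=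
      ((exp_neg_integrableOn_Ioi 1 (by linarith)).add
        (exp_neg_integrableOn_Ioi 1 hc)).const_mul C'
    refine hdom.mono' hmeas (ae_restrict_of_forall_mem measurableSet_Ioi fun t ht => ?_)
    have ht₀ : (0 : ℝ) < t := zero_lt_one.trans ht
    rw [norm_levyIntegrand q K ht₀]
    calc ‖Complex.exp (-(t : ℂ) * q) - 1‖ * |K t| / t
        ≤ ‖Complex.exp (-(t : ℂ) * q) - 1‖ * |K t| :=
          div_le_self (by positivity) (le_of_lt ht)
      _ ≤ (Real.exp (-q.re * t) + 1) * (C' * Real.exp (-c * t)) :=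
          mul_le_mul (norm_cexp_neg_mul_sub_one_le q t) (hlarge t ht) (abs_nonneg _)
            (by positivity)
      _ = C' * (Real.exp (-(q.re + c) * t) + Real.exp (-c * t)) := by
          rw [show -(q.re + c) * t = -q.re * t + -c * t by ring, Real.exp_add]; ring

lemma one_sub_exp_neg_mul_nonneg {x t : ℝ} (hx : 0 ≤ x) (ht : 0 ≤ t) :
    0 ≤ 1 - Real.exp (-x * t) :=
  sub_nonneg.2 (Real.exp_le_one_iff.2 (by nlinarith))

lemma one_sub_exp_neg_mul_pos {x t : ℝ} (hx : 0 < x) (ht : 0 < t) :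
    0 < 1 - Real.exp (-x * t) :=
  sub_pos.2 (Real.exp_lt_one_iff.2 (by nlinarith))

lemma mul_exp_neg_le_one_sub_exp_neg (x : ℝ) : x * Real.exp (-x) ≤ 1 - Real.exp (-x) := by
  have h := mul_le_mul_of_nonneg_right (Real.add_one_le_exp x) (Real.exp_pos (-x)).le
  rw [← Real.exp_add, add_neg_cancel, Real.exp_zero] at h
  linarith

lemma mul_exp_neg_mul_le_one_sub_exp_neg_mul {x t : ℝ} (hx : 0 ≤ x) (ht₀ : 0 ≤ t)
    (ht₁ : t ≤ 1) :
    x * Real.exp (-x) * t ≤ 1 - Real.exp (-x * t) := by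
  have h := mul_exp_neg_le_one_sub_exp_neg (x * t)
  have hexp : Real.exp (-x) ≤ Real.exp (-(x * t)) := Real.exp_le_exp.2 (by nlinarith)
  rw [neg_mul]
  nlinarith [mul_nonneg hx ht₀]

section barnesKernel

variable {a b : ℕ → ℝ} {A B : Finset ℕ} {c t : ℝ}

lemma measurable_barnesKernel : Measurable (barnesKernel a b A B c) := by
  unfold barnesKernel; fun_prop

lemma barnesKernel_nonneg (ha : ∀ l ∈ A, 0 ≤ a l) (hb : ∀ j ∈ B, 0 ≤ b j)
    (ht : 0 ≤ t) :
    0 ≤ barnesKernel a b A B c t :=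
  div_nonneg
    (mul_nonneg (Real.exp_pos _).le
      (prod_nonneg fun j hj => one_sub_exp_neg_mul_nonneg (hb j hj) ht))
    (prod_nonneg fun l hl => one_sub_exp_neg_mul_nonneg (ha l hl) ht)

/-- Near `0` the numerator vanishes to order `#B` and the denominator to order `#A`. -/
lemma barnesKernel_le_of_le_one (ha : ∀ l ∈ A, 0 < a l) (hb : ∀ j ∈ B, 0 ≤ b j)
    (hAB : #A ≤ #B) (hc : 0 ≤ c) (ht₀ : 0 < t) (ht₁ : t ≤ 1) :
    barnesKernel a b A B c t ≤ (∏ j ∈ B, b j) / ∏ l ∈ A, a l * Real.exp (-a l) := by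
  have hnum : Real.exp (-c * t) * ∏ j ∈ B, (1 - Real.exp (-(b j) * t)) ≤
      (∏ j ∈ B, b j) * t ^ #A :=
    calc Real.exp (-c * t) * ∏ j ∈ B, (1 - Real.exp (-(b j) * t))
        ≤ 1 * ∏ j ∈ B, (b j * t) :=
          mul_le_mul (Real.exp_le_one_iff.2 (by nlinarith))
            (prod_le_prod (fun j hj => one_sub_exp_neg_mul_nonneg (hb j hj) ht₀.le)
              fun j _ => by rw [neg_mul]; linarith [Real.one_sub_le_exp_neg (b j * t)])
            (prod_nonneg fun j hj => one_sub_exp_neg_mul_nonneg (hb j hj) ht₀.le)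
            zero_le_one
      _ = (∏ j ∈ B, b j) * t ^ #B := by rw [one_mul, prod_mul_distrib, prod_const]
      _ ≤ (∏ j ∈ B, b j) * t ^ #A :=
          mul_le_mul_of_nonneg_left (pow_le_pow_of_le_one ht₀.le ht₁ hAB) (prod_nonneg hb)
  have hden : (∏ l ∈ A, a l * Real.exp (-a l)) * t ^ #A ≤
      ∏ l ∈ A, (1 - Real.exp (-(a l) * t)) :=
    calc (∏ l ∈ A, a l * Real.exp (-a l)) * t ^ #A
        = ∏ l ∈ A, a l * Real.exp (-a l) * t := by
          simp only [prod_mul_distrib, prod_const]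
      _ ≤ ∏ l ∈ A, (1 - Real.exp (-(a l) * t)) :=
          prod_le_prod (fun l hl => by have := ha l hl; positivity)
            fun l hl => mul_exp_neg_mul_le_one_sub_exp_neg_mul (ha l hl).le ht₀.le ht₁
  have hpos : 0 < (∏ l ∈ A, a l * Real.exp (-a l)) * t ^ #A :=
    mul_pos (prod_pos fun l hl => mul_pos (ha l hl) (Real.exp_pos _)) (pow_pos ht₀ _)
  calc barnesKernel a b A B c t
      ≤ (∏ j ∈ B, b j) * t ^ #A / ((∏ l ∈ A, a l * Real.exp (-a l)) * t ^ #A) :=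
        div_le_div₀ (mul_nonneg (prod_nonneg hb) (pow_nonneg ht₀.le _)) hnum hpos hden
    _ = (∏ j ∈ B, b j) / ∏ l ∈ A, a l * Real.exp (-a l) :=
        mul_div_mul_right _ _ (pow_ne_zero _ ht₀.ne')

lemma barnesKernel_le_of_one_le (ha : ∀ l ∈ A, 0 < a l) (hb : ∀ j ∈ B, 0 ≤ b j)
    (ht : 1 ≤ t) :
    barnesKernel a b A B c t ≤ (∏ l ∈ A, (1 - Real.exp (-a l)))⁻¹ * Real.exp (-c * t) := by
  have ht₀ : 0 ≤ t := zero_le_one.trans ht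
  have hnum : Real.exp (-c * t) * ∏ j ∈ B, (1 - Real.exp (-(b j) * t)) ≤ Real.exp (-c * t) :=
    mul_le_of_le_one_right (Real.exp_pos _).le
      (prod_le_one (fun j hj => one_sub_exp_neg_mul_nonneg (hb j hj) ht₀)
        fun j _ => by linarith [Real.exp_pos (-(b j) * t)])
  have hden : ∏ l ∈ A, (1 - Real.exp (-a l)) ≤ ∏ l ∈ A, (1 - Real.exp (-(a l) * t)) := by
    refine prod_le_prod (fun l hl => ?_) fun l hl => ?_
    · simpa using one_sub_exp_neg_mul_nonneg (ha l hl).le zero_le_one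
    · gcongr; nlinarith [ha l hl]
  rw [inv_mul_eq_div]
  exact div_le_div₀ (Real.exp_pos _).le hnum
    (prod_pos fun l hl => by simpa using one_sub_exp_neg_mul_pos (ha l hl) zero_lt_one) hden

lemma integrableOn_levyIntegrand_barnesKernel {q : ℂ} (ha : ∀ l ∈ A, 0 < a l)
    (hb : ∀ j ∈ B, 0 ≤ b j) (hAB : #A ≤ #B) (hc : 0 < c) (hcq : -c < q.re) :
    IntegrableOn (levyIntegrand q (barnesKernel a b A B c)) (Set.Ioi 0) :=
  integrableOn_levyIntegrand measurable_barnesKernel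
    (fun t ht => by
      rw [abs_of_nonneg (barnesKernel_nonneg (fun l hl => (ha l hl).le) hb ht.1.le)]
      exact barnesKernel_le_of_le_one ha hb hAB hc.le ht.1 ht.2)
    (fun t ht => by
      rw [abs_of_nonneg (barnesKernel_nonneg (fun l hl => (ha l hl).le) hb
        (zero_le_one.trans (le_of_lt ht)))]
      exact barnesKernel_le_of_one_le ha hb (le_of_lt ht))
    hc hcq

lemma barnesKernel_add_nat_mul (k : ℕ) (x : ℝ) :
    barnesKernel a b A B (c + k * x) t =
      barnesKernel a b A B c t * Real.exp (-x * t) ^ k := by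
  have h : Real.exp (-(c + k * x) * t) = Real.exp (-c * t) * Real.exp (-x * t) ^ k := by
    rw [← Real.exp_nat_mul, ← Real.exp_add]; ring_nf
  rw [barnesKernel, barnesKernel, h]; ring

/-- Expanding `1 / (1 - e^{-a_i t})` as a geometric series. -/
lemma hasSum_barnesKernel_erase {i : ℕ} (hi : i ∈ A) (hai : 0 < a i) (ht : 0 < t) :
    HasSum (fun k : ℕ => barnesKernel a b (A.erase i) B (c + k * a i) t)
      (barnesKernel a b A B c t) := by
  have hval : barnesKernel a b A B c t =
      barnesKernel a b (A.erase i) B c t * (1 - Real.exp (-a i * t))⁻¹ := by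
    unfold barnesKernel
    rw [← mul_prod_erase A _ hi, div_mul_eq_div_div_swap, div_eq_mul_inv]
  simp only [barnesKernel_add_nat_mul, hval]
  exact (hasSum_geometric_of_lt_one (Real.exp_pos _).le
    (Real.exp_lt_one_iff.2 (by nlinarith))).mul_left _

lemma hasSum_integral_levyIntegrand_barnesKernel_erase {q : ℂ} {i : ℕ} (hi : i ∈ A)
    (ha : ∀ l ∈ A, 0 < a l) (hb : ∀ j ∈ B, 0 ≤ b j) (hAB : #A ≤ #B) (hc : 0 < c)
    (hcq : -c < q.re) :
    HasSum
      (fun k : ℕ => ∫ t in Set.Ioi 0,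
        levyIntegrand q (barnesKernel a b (A.erase i) B (c + k * a i)) t)
      (∫ t in Set.Ioi 0, levyIntegrand q (barnesKernel a b A B c) t) := by
  have hint := integrableOn_levyIntegrand_barnesKernel ha hb hAB hc hcq
  simp only [levyIntegrand_eq_mul] at hint ⊢
  refine hasSum_integral_mul_ofReal (Measurable.aestronglyMeasurable (by fun_prop))
    (fun k => measurable_barnesKernel.aestronglyMeasurable)
    (fun k => ae_restrict_of_forall_mem measurableSet_Ioi fun t ht =>
      barnesKernel_nonneg (fun l hl => (ha l (mem_of_mem_erase hl)).le) hb (le_of_lt ht))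
    (ae_restrict_of_forall_mem measurableSet_Ioi fun t ht =>
      hasSum_barnesKernel_erase hi (ha i hi) ht) hint

end barnesKernel

theorem stmt7_general (M N : ℕ) (hMN : M ≤ N) (a b : ℕ → ℝ)
    (ha : ∀ l ∈ Finset.Icc 1 M, 0 < a l)
    (hb : ∀ j ∈ Finset.Icc 0 N, 0 < b j)
    (i : ℕ) (hi : i ∈ Finset.Icc 1 M)
    (q : ℂ) (hq : -(b 0) < q.re)
    (ηsub : ℝ → ℂ)
    (hηsub : ∀ c : ℝ, ηsub c =
      Complex.exp (∫ t in Set.Ioi (0:ℝ),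
        (Complex.exp (-(t : ℂ) * q) - 1) *
          ((Real.exp (-c * t) *
            (∏ j ∈ Finset.Icc 1 N, (1 - Real.exp (-(b j) * t))) /
            ∏ l ∈ (Finset.Icc 1 M).erase i, (1 - Real.exp (-(a l) * t)) : ℝ) : ℂ) / (t : ℂ))) :
    HasProd (fun k : ℕ => ηsub (b 0 + k * a i))
      (Complex.exp (∫ t in Set.Ioi (0:ℝ),
        (Complex.exp (-(t : ℂ) * q) - 1) *
          ((Real.exp (-(b 0) * t) *
            (∏ j ∈ Finset.Icc 1 N, (1 - Real.exp (-(b j) * t))) /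
            ∏ l ∈ Finset.Icc 1 M, (1 - Real.exp (-(a l) * t)) : ℝ) : ℂ) / (t : ℂ))) := by
  have hb₀ : 0 < b 0 := hb 0 (by simp)
  have hbN : ∀ j ∈ Finset.Icc 1 N, 0 ≤ b j := fun j hj =>
    (hb j (Finset.Icc_subset_Icc_left zero_le_one hj)).le
  have hsum := hasSum_integral_levyIntegrand_barnesKernel_erase (q := q) hi ha hbN
    (by simpa using hMN) hb₀ hq
  simp only [hηsub]
  exact hsum.cexp

/-- Shintani-type factorization of `η_{M,N}(q | a, b)` (stated via the
Lévy–Khinchine integral representations): with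
`η_{M−1,N}(c; q) = exp(∫_0^∞ (e^{−tq}−1) e^{−ct} ∏_{j=1}^N(1−e^{−b_j t}) / ∏_{l≠i}(1−e^{−a_l t}) dt/t)`,
one has `η_{M,N}(q | a, b) = ∏_{k=0}^∞ η_{M−1,N}(b_0 + k a_i; q)`, the product converging. -/
theorem stmt7 (M N : ℕ) (hM : 1 ≤ M) (hMN : M ≤ N) (a b : ℕ → ℝ)
    (ha : ∀ l ∈ Finset.Icc 1 M, 0 < a l)
    (hb : ∀ j ∈ Finset.Icc 0 N, 0 < b j)
    (i : ℕ) (hi : i ∈ Finset.Icc 1 M)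
    (q : ℂ) (hq : -(b 0) < q.re)
    (ηsub : ℝ → ℂ)
    (hηsub : ∀ c : ℝ, ηsub c =
      Complex.exp (∫ t in Set.Ioi (0:ℝ),
        (Complex.exp (-(t : ℂ) * q) - 1) *
          ((Real.exp (-c * t) *
            (∏ j ∈ Finset.Icc 1 N, (1 - Real.exp (-(b j) * t))) /
            ∏ l ∈ (Finset.Icc 1 M).erase i, (1 - Real.exp (-(a l) * t)) : ℝ) : ℂ) / (t : ℂ))) :
    HasProd (fun k : ℕ => ηsub (b 0 + k * a i))
      (Complex.exp (∫ t in Set.Ioi (0:ℝ),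
        (Complex.exp (-(t : ℂ) * q) - 1) *
          ((Real.exp (-(b 0) * t) *
            (∏ j ∈ Finset.Icc 1 N, (1 - Real.exp (-(b j) * t))) /
            ∏ l ∈ Finset.Icc 1 M, (1 - Real.exp (-(a l) * t)) : ℝ) : ℂ) / (t : ℂ))) :=
  stmt7_general M N hMN a b ha hb i hi q hq ηsub hηsub
end

section
/- For every real τ > 0, ∫_0^∞ [ t / ( (e^{t/2} − 1)(e^{tτ/2} − 1) ) − 4t / ( (e^t − 1)(e^{tτ} − 1) ) ] dt = (4/τ) log 2. -/
/-!
With `f(t) = t / ((e^{t/2} - 1)(e^{tτ/2} - 1))` the integrand is `f(t) - 2 f(2t)`, so this is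
a Frullani integral: over `(ε, ∞)` the two terms telescope to `∫_ε^{2ε} f`. The elementary bounds
`x e^{x/2} ≤ e^x - 1 ≤ x e^x` show that `f(t) - 4/(τ t)` is bounded on `(0, ∞)`, so
`∫_ε^{2ε} f = (4/τ) log 2 + O(ε)`, and the contribution of `(0, ε)` is `O(ε)` as well.
-/

open Real MeasureTheory Set Filter Topology

lemma eq_of_forall_abs_sub_le_mul {x y K : ℝ} (h : ∀ ε > 0, |x - y| ≤ K * ε) : x = y := by
  have hK : Tendsto (fun ε => K * ε) (𝓝[>] 0) (𝓝 0) := by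
    simpa using ((continuous_const_mul K).tendsto 0).mono_left nhdsWithin_le_nhds
  have := ge_of_tendsto hK (eventually_nhdsWithin_of_forall h)
  exact sub_eq_zero.1 (abs_nonpos_iff.1 this)

lemma aestronglyMeasurable_Ioi_zero_of_integrableOn {g : ℝ → ℝ}
    (hg : ∀ ε > 0, IntegrableOn g (Ioi ε)) :
    AEStronglyMeasurable g (volume.restrict (Ioi 0)) := by
  have hcover : Ioi (0 : ℝ) = ⋃ n : ℕ, Ioi (1 / ((n : ℝ) + 1)) := by
    ext x
    simp only [mem_Ioi, mem_iUnion]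
    refine ⟨exists_nat_one_div_lt, fun ⟨n, hn⟩ => lt_trans (by positivity) hn⟩
  rw [hcover, aestronglyMeasurable_iUnion_iff]
  exact fun n => (hg _ (by positivity)).aestronglyMeasurable

section Frullani

variable {f : ℝ → ℝ} {a : ℝ}

lemma integral_Ioi_sub_mul_comp_mul (ha : 0 < a) {ε : ℝ} (hf : IntegrableOn f (Ioi ε))
    (hf' : IntegrableOn f (Ioi (a * ε))) :
    ∫ t in Ioi ε, (f t - a * f (a * t)) = ∫ t in ε..a * ε, f t := by
  rw [integral_sub hf (((integrableOn_Ioi_comp_mul_left_iff f ε ha).2 hf').const_mul a),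
    integral_const_mul, integral_comp_mul_left_Ioi f ε ha, smul_eq_mul,
    mul_inv_cancel_left₀ ha.ne', intervalIntegral.integral_Ioi_sub_Ioi' hf hf']

lemma integrableOn_Ioi_sub_mul_comp_mul (ha : 0 < a) (hf : ∀ ε > 0, IntegrableOn f (Ioi ε))
    {ε : ℝ} (hε : 0 < ε) : IntegrableOn (fun t => f t - a * f (a * t)) (Ioi ε) :=
  (hf ε hε).sub (((integrableOn_Ioi_comp_mul_left_iff f ε ha).2
    (hf _ (by positivity))).const_mul a)

lemma abs_sub_mul_comp_mul_le (ha : 0 < a) {c C : ℝ} (hfc : ∀ t > 0, |f t - c / t| ≤ C)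
    {t : ℝ} (ht : 0 < t) : |f t - a * f (a * t)| ≤ (1 + a) * C := by
  have hsplit : f t - a * f (a * t) = (f t - c / t) - a * (f (a * t) - c / (a * t)) := by
    field_simp; ring
  rw [hsplit]
  calc _ ≤ |f t - c / t| + a * |f (a * t) - c / (a * t)| := by
        simpa [abs_mul, abs_of_pos ha] using abs_sub (f t - c / t) (a * (f (a * t) - c / (a * t)))
    _ ≤ C + a * C := by gcongr <;> apply hfc <;> positivity
    _ = (1 + a) * C := by ring

lemma integrableOn_Ioi_zero_sub_mul_comp_mul (ha : 0 < a) {c C : ℝ}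
    (hf : ∀ ε > 0, IntegrableOn f (Ioi ε)) (hfc : ∀ t > 0, |f t - c / t| ≤ C) :
    IntegrableOn (fun t => f t - a * f (a * t)) (Ioi 0) := by
  have hg : ∀ ε > 0, IntegrableOn (fun t => f t - a * f (a * t)) (Ioi ε) := fun _ hε =>
    integrableOn_Ioi_sub_mul_comp_mul ha hf hε
  rw [← Ioc_union_Ioi_eq_Ioi zero_le_one]
  refine IntegrableOn.union ?_ (hg 1 one_pos)
  refine Integrable.mono' (integrableOn_const (C := (1 + a) * C) measure_Ioc_lt_top.ne)
    ((aestronglyMeasurable_Ioi_zero_of_integrableOn hg).mono_set Ioc_subset_Ioi_self) ?_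
  filter_upwards [ae_restrict_mem measurableSet_Ioc] with t ht
    using abs_sub_mul_comp_mul_le ha hfc ht.1

lemma integral_const_div_eq_mul_log (ha : 0 < a) (c : ℝ) {ε : ℝ} (hε : 0 < ε) :
    ∫ t in ε..a * ε, c / t = c * log a := by
  simp only [div_eq_mul_inv]
  rw [intervalIntegral.integral_const_mul, integral_inv_of_pos hε (by positivity),
    mul_div_cancel_right₀ _ hε.ne']

theorem integral_Ioi_sub_mul_comp_mul_eq_mul_log (ha : 0 < a) {c C : ℝ}
    (hf : ∀ ε > 0, IntegrableOn f (Ioi ε)) (hfc : ∀ t > 0, |f t - c / t| ≤ C) :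
    ∫ t in Ioi 0, (f t - a * f (a * t)) = c * log a := by
  refine eq_of_forall_abs_sub_le_mul (K := (1 + a) * C + C * |a - 1|) fun ε hε => ?_
  have hpos : 0 < min ε (a * ε) := lt_min hε (by positivity)
  have hfi : IntervalIntegrable f volume ε (a * ε) :=
    intervalIntegrable_iff.2 ((hf _ hpos).mono_set fun t ht => ht.1)
  have hci : IntervalIntegrable (fun t => c / t) volume ε (a * ε) :=
    (continuousOn_const.div continuousOn_id fun t ht => (hpos.trans_le ht.1).ne').intervalIntegrable
  rw [← intervalIntegral.integral_interval_add_Ioi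
      (integrableOn_Ioi_zero_sub_mul_comp_mul ha hf hfc)
      (integrableOn_Ioi_sub_mul_comp_mul ha hf hε),
    integral_Ioi_sub_mul_comp_mul ha (hf ε hε) (hf _ (by positivity)),
    ← integral_const_div_eq_mul_log ha c hε, add_sub_assoc,
    ← intervalIntegral.integral_sub hfi hci]
  calc _ ≤ |∫ t in 0..ε, (f t - a * f (a * t))| + |∫ t in ε..a * ε, (f t - c / t)| :=
        abs_add_le _ _
    _ ≤ (1 + a) * C * |ε - 0| + C * |a * ε - ε| := by
        gcongr
        · exact intervalIntegral.norm_integral_le_of_norm_le_const fun t ht =>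
            (norm_eq_abs _).trans_le (abs_sub_mul_comp_mul_le ha hfc (by simpa [hε.le] using ht.1))
        · exact intervalIntegral.norm_integral_le_of_norm_le_const fun t ht =>
            (norm_eq_abs _).trans_le (hfc t (hpos.trans ht.1))
    _ = ((1 + a) * C + C * |a - 1|) * ε := by
        rw [sub_zero, abs_of_pos hε, ← sub_one_mul, abs_mul, abs_of_pos hε]; ring

end Frullani

lemma Real.mul_exp_half_le_exp_sub_one {x : ℝ} (hx : 0 ≤ x) :
    x * exp (x / 2) ≤ exp x - 1 := by
  have hsinh : x / 2 ≤ sinh (x / 2) := self_le_sinh_iff.2 (by linarith)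
  rw [sinh_eq] at hsinh
  have hsq : exp (x / 2) * exp (x / 2) = exp x := by rw [← exp_add]; ring_nf
  have hinv : exp (x / 2) * exp (-(x / 2)) = 1 := by rw [← exp_add]; simp
  nlinarith [mul_le_mul_of_nonneg_left hsinh (exp_pos (x / 2)).le]

lemma Real.exp_sub_one_le_mul_exp (x : ℝ) : exp x - 1 ≤ x * exp x := by
  have hinv : exp (-x) * exp x = 1 := by rw [← exp_add]; simp
  nlinarith [add_one_le_exp (-x), exp_pos x]

noncomputable def selbergKernel (τ t : ℝ) : ℝ :=
  t / ((exp (t / 2) - 1) * (exp (t * τ / 2) - 1))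

section SelbergKernel

variable {τ t : ℝ}

lemma selbergKernel_denom_pos (hτ : 0 < τ) (ht : 0 < t) :
    0 < (exp (t / 2) - 1) * (exp (t * τ / 2) - 1) :=
  mul_pos (sub_pos.2 (one_lt_exp_iff.2 (by positivity)))
    (sub_pos.2 (one_lt_exp_iff.2 (by positivity)))

lemma selbergKernel_pos (hτ : 0 < τ) (ht : 0 < t) : 0 < selbergKernel τ t :=
  div_pos ht (selbergKernel_denom_pos hτ ht)

lemma selbergKernel_le (hτ : 0 < τ) (ht : 0 < t) :
    selbergKernel τ t ≤ 4 / τ / t * exp (-((1 + τ) / 4) * t) := by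
  have h₁ := mul_exp_half_le_exp_sub_one (x := t / 2) (by positivity)
  have h₂ := mul_exp_half_le_exp_sub_one (x := t * τ / 2) (by positivity)
  calc selbergKernel τ t
      ≤ t / ((t / 2 * exp (t / 2 / 2)) * (t * τ / 2 * exp (t * τ / 2 / 2))) :=
        div_le_div_of_nonneg_left ht.le (by positivity)
          (mul_le_mul h₁ h₂ (by positivity) (sub_nonneg.2 (one_le_exp (by positivity))))
    _ = 4 / τ / t * exp (-((1 + τ) / 4) * t) := by
        rw [show -((1 + τ) / 4) * t = -(t / 2 / 2 + t * τ / 2 / 2) by ring, exp_neg, exp_add]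
        field_simp
        norm_num

lemma le_selbergKernel (hτ : 0 < τ) (ht : 0 < t) :
    4 / τ / t * exp (-((1 + τ) * t / 2)) ≤ selbergKernel τ t := by
  have h₁ := exp_sub_one_le_mul_exp (t / 2)
  have h₂ := exp_sub_one_le_mul_exp (t * τ / 2)
  calc 4 / τ / t * exp (-((1 + τ) * t / 2))
      = t / ((t / 2 * exp (t / 2)) * (t * τ / 2 * exp (t * τ / 2))) := by
        rw [show -((1 + τ) * t / 2) = -(t / 2 + t * τ / 2) by ring, exp_neg, exp_add]
        field_simp
        norm_num
    _ ≤ selbergKernel τ t :=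
        div_le_div_of_nonneg_left ht.le (selbergKernel_denom_pos hτ ht)
          (mul_le_mul h₁ h₂ (sub_nonneg.2 (one_le_exp (by positivity))) (by positivity))

lemma abs_selbergKernel_sub_le (hτ : 0 < τ) (ht : 0 < t) :
    |selbergKernel τ t - 4 / τ / t| ≤ 2 * (1 + τ) / τ := by
  have hu : 0 < 4 / τ / t := by positivity
  have hupper : selbergKernel τ t ≤ 4 / τ / t :=
    (selbergKernel_le hτ ht).trans (mul_le_of_le_one_right hu.le (exp_le_one_iff.2 (by
      nlinarith)))
  have hexp : 1 - (1 + τ) * t / 2 ≤ exp (-((1 + τ) * t / 2)) := by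
    linarith [add_one_le_exp (-((1 + τ) * t / 2))]
  rw [abs_sub_comm, abs_of_nonneg (sub_nonneg.2 hupper)]
  calc 4 / τ / t - selbergKernel τ t
      ≤ 4 / τ / t - 4 / τ / t * exp (-((1 + τ) * t / 2)) := by
        linarith [le_selbergKernel hτ ht]
    _ ≤ 4 / τ / t - 4 / τ / t * (1 - (1 + τ) * t / 2) := by gcongr
    _ = 2 * (1 + τ) / τ := by field_simp; ring

lemma continuousOn_selbergKernel (hτ : 0 < τ) : ContinuousOn (selbergKernel τ) (Ioi 0) := by
  unfold selbergKernel
  exact continuousOn_id.div (by fun_prop) fun t ht => (selbergKernel_denom_pos hτ ht).ne'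

lemma integrableOn_selbergKernel_Ioi (hτ : 0 < τ) {ε : ℝ} (hε : 0 < ε) :
    IntegrableOn (selbergKernel τ) (Ioi ε) := by
  refine Integrable.mono' ((exp_neg_integrableOn_Ioi ε (b := (1 + τ) / 4)
    (by positivity)).const_mul (4 / τ / ε)) ((continuousOn_selbergKernel hτ).mono
    (Ioi_subset_Ioi hε.le) |>.aestronglyMeasurable measurableSet_Ioi) ?_
  filter_upwards [ae_restrict_mem measurableSet_Ioi] with t (ht : ε < t)
  have ht₀ : 0 < t := hε.trans ht
  rw [norm_of_nonneg (selbergKernel_pos hτ ht₀).le]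
  exact (selbergKernel_le hτ ht₀).trans (by gcongr)

end SelbergKernel

/-- the Gaussian component of the Selberg integral distribution:
`∫_0^∞ [t/((e^{t/2}−1)(e^{tτ/2}−1)) − 4t/((e^t−1)(e^{tτ}−1))] dt = (4/τ) log 2`. -/
theorem stmt15 (τ : ℝ) (hτ : 0 < τ) :
    ∫ t in Set.Ioi (0:ℝ),
      (t / ((Real.exp (t / 2) - 1) * (Real.exp (t * τ / 2) - 1)) -
       4 * t / ((Real.exp t - 1) * (Real.exp (t * τ) - 1))) =
    (4 / τ) * Real.log 2 := by
  have hintegrand : ∀ t : ℝ,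
      t / ((exp (t / 2) - 1) * (exp (t * τ / 2) - 1)) - 4 * t / ((exp t - 1) * (exp (t * τ) - 1))
        = selbergKernel τ t - 2 * selbergKernel τ (2 * t) := by
    intro t
    rw [selbergKernel, selbergKernel, show 2 * t / 2 = t by ring,
      show 2 * t * τ / 2 = t * τ by ring]
    ring
  simp only [hintegrand]
  exact integral_Ioi_sub_mul_comp_mul_eq_mul_log two_pos
    (fun _ hε => integrableOn_selbergKernel_Ioi hτ hε) fun _ ht => abs_selbergKernel_sub_le hτ ht
end
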